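/- arXiv:1411.6497 — 4 statements merged into one kernel-verified Lean document; each statement's English description precedes it below -/
import Mathlib

section
/- Let L be an algebraic lattice and let (φ_i)_{i∈I} be a family of algebraic (finitary) closure operators on L. Define μ : L → L by μ(x) = ⨆ over all finite sequences (j₁,…,j_k) with entries in I (including the empty sequence, which contributes x) of φ_{j₁}(φ_{j₂}(⋯φ_{j_k}(x)⋯)). Then μ is finitary: μ(x) = ⨆ {μ(k) : k compact, k ≤ x} for all x ∈ L. -/
/-- A closure operator on a complete lattice: extensive, idempotent and isotone. -/
def IsClosureOp {L : Type*} [CompleteLattice L] (φ : L → L) : Prop :=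
  (∀ x, x ≤ φ x) ∧ (∀ x, φ (φ x) = φ x) ∧ (∀ x y : L, x ≤ y → φ x ≤ φ y)

/-- A map on a complete lattice is finitary if its value at `x` is the sup of its
values at the compact elements below `x`. -/
def Finitary {L : Type*} [CompleteLattice L] (φ : L → L) : Prop :=
  ∀ x : L, φ x = ⨆ k ∈ {k : L | IsCompactElement k ∧ k ≤ x}, φ k

/-- The composite `φ_{j₁} ∘ φ_{j₂} ∘ ⋯ ∘ φ_{j_k}` indexed by a finite sequence
`j = (j₁, …, j_k)`; the empty sequence gives the identity. -/
def seqComp {L : Type*} {I : Type*} (φ : I → L → L) (j : List I) : L → L :=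
  (j.map φ).foldr (· ∘ ·) id

/-! A finitary map is monotone, its value at `x` being a supremum over the compact elements
below `x`. In a compactly generated lattice the identity is finitary, and finitary maps are
closed under pointwise suprema and under composition: a compact element below `g x` lies below
`g k` for a single compact `k ≤ x`, because finitely many compact elements below `x` have a
compact join. Hence every `seqComp φ j` is finitary, and so is their supremum. -/

open CompleteLattice

section Finitary

variable {L : Type*} [CompleteLattice L] {f g : L → L}

theorem Finitary.monotone (hf : Finitary f) : Monotone f := by
  intro x y hxy
  rw [hf x, hf y]
  exact biSup_mono fun k hk => ⟨hk.1, hk.2.trans hxy⟩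

theorem Finitary.exists_isCompactElement_le_apply (hg : Finitary g) {c x : L}
    (hc : IsCompactElement c) (hcx : c ≤ g x) :
    ∃ k, IsCompactElement k ∧ k ≤ x ∧ c ≤ g k := by
  rw [hg x, iSup_subtype'] at hcx
  obtain ⟨s, hs⟩ := IsCompactElement.exists_finset_of_le_iSup L hc _ hcx
  refine ⟨s.sup Subtype.val, isCompactElement_finsetSup s fun k _ => k.2.1,
    Finset.sup_le fun k _ => k.2.2, hs.trans (iSup₂_le fun k hk => ?_)⟩
  exact hg.monotone (Finset.le_sup (f := Subtype.val) hk)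

theorem finitary_id [IsCompactlyGenerated L] : Finitary (id : L → L) := fun x =>
  (sSup_compact_le_eq x).symm.trans sSup_eq_iSup

theorem Finitary.comp [IsCompactlyGenerated L] (hf : Finitary f) (hg : Finitary g) :
    Finitary (f ∘ g) := by
  intro x
  refine le_antisymm ?_ (iSup₂_le fun k hk => (hf.monotone.comp hg.monotone) hk.2)
  rw [Function.comp_apply, hf (g x)]
  refine iSup₂_le fun c hc => ?_
  obtain ⟨k, hk, hkx, hck⟩ := hg.exists_isCompactElement_le_apply hc.1 hc.2
  exact (hf.monotone hck).trans (le_iSup₂ (f := fun k (_ : _ ∧ _) => f (g k)) k ⟨hk, hkx⟩)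

theorem Finitary.iSup {ι : Sort*} {f : ι → L → L} (hf : ∀ i, Finitary (f i)) :
    Finitary (fun x => ⨆ i, f i x) := by
  intro x
  refine le_antisymm ?_ (iSup₂_le fun k hk => iSup_mono fun i => (hf i).monotone hk.2)
  refine iSup_le fun i => ?_
  rw [hf i x]
  exact iSup₂_mono fun k _ => le_iSup (fun i => f i k) i

end Finitary

theorem finitary_seqComp {L I : Type*} [CompleteLattice L] [IsCompactlyGenerated L]
    {φ : I → L → L} (hfin : ∀ i, Finitary (φ i)) (j : List I) : Finitary (seqComp φ j) := by
  induction j with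
  | nil => exact finitary_id
  | cons i j ih => exact (hfin i).comp ih

theorem mu_finitary_general {L : Type*} [CompleteLattice L] [IsCompactlyGenerated L]
    {I : Type*} (φ : I → L → L)
    (hfin : ∀ i, Finitary (φ i)) :
    Finitary (fun x : L => ⨆ j : List I, seqComp φ j x) :=
  Finitary.iSup (finitary_seqComp hfin)

/-- For a family of algebraic closure operators `φ_i` on an algebraic lattice,
the map `μ x = ⨆_{finite sequences j in I} φ_{j₁}(φ_{j₂}(⋯ φ_{j_k}(x)⋯))`
(the empty sequence contributing `x`) is finitary. -/
theorem mu_finitary {L : Type*} [CompleteLattice L] [IsCompactlyGenerated L]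
    {I : Type*} (φ : I → L → L)
    (hco : ∀ i, IsClosureOp (φ i)) (hfin : ∀ i, Finitary (φ i)) :
    Finitary (fun x : L => ⨆ j : List I, seqComp φ j x) :=
  mu_finitary_general φ hfin
end

section
/- Let L be an algebraic lattice and let (φ_i)_{i∈I} be a family of algebraic (finitary) closure operators on L. Define μ : L → L by μ(x) = ⨆ over all finite sequences (j₁,…,j_k) with entries in I (including the empty sequence, which contributes x) of φ_{j₁}(φ_{j₂}(⋯φ_{j_k}(x)⋯)). Then μ is an algebraic closure operator, φ_i(x) ≤ μ(x) for every i ∈ I and x ∈ L, and for every closure operator ρ on L with φ_i(x) ≤ ρ(x) for all i ∈ I and x ∈ L one has μ(x) ≤ ρ(x) for all x ∈ L. That is, μ is the join of the family (φ_i) in the lattice of closure operators on L, and this join is itself algebraic. -/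
section

variable {L I : Type*} (φ : I → L → L)

@[simp] theorem seqComp_cons (i : I) (j : List I) :
    seqComp φ (i :: j) = φ i ∘ seqComp φ j := rfl

theorem seqComp_append (j₁ j₂ : List I) :
    seqComp φ (j₁ ++ j₂) = seqComp φ j₁ ∘ seqComp φ j₂ := by
  induction j₁ with
  | nil => rfl
  | cons i j ih => simp [ih, Function.comp_assoc]

end

open CompleteLattice Set

section

variable {L : Type*} [CompleteLattice L]

theorem CompleteLattice.isCompactElement_bot : IsCompactElement (⊥ : L) := by
  simpa using isCompactElement_finsetSup (f := id) (∅ : Finset L) (by simp)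

theorem CompleteLattice.IsCompactElement.sup {a b : L} (ha : IsCompactElement a)
    (hb : IsCompactElement b) : IsCompactElement (a ⊔ b) := by
  classical
  simpa using isCompactElement_finsetSup (f := id) {a, b} (by simp [ha, hb])

theorem directedOn_compact_le (x : L) :
    DirectedOn (· ≤ ·) {k : L | IsCompactElement k ∧ k ≤ x} :=
  fun a ⟨ha, hax⟩ b ⟨hb, hbx⟩ =>
    ⟨a ⊔ b, ⟨ha.sup hb, sup_le hax hbx⟩, le_sup_left, le_sup_right⟩

namespace Finitary

variable {f : L → L}

protected theorem monotone_s7 (hf : Finitary f) : Monotone f := fun x y hxy => by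
  rw [hf x, hf y]
  exact biSup_mono fun k hk => ⟨hk.1, hk.2.trans hxy⟩

theorem scottContinuous (hf : Finitary f) : ScottContinuous f := by
  refine .of_map_sSup fun d hd hdir => le_antisymm ?_ (sSup_image.trans_le hf.monotone_s7.le_map_sSup)
  rw [hf]
  refine iSup₂_le fun k ⟨hk, hkd⟩ => ?_
  obtain ⟨e, he, hke⟩ := (isCompactElement_iff_le_of_directed_sSup_le L k).mp hk d hd hdir hkd
  exact (hf.monotone_s7 hke).trans (le_sSup (mem_image_of_mem f he))

theorem iSup_s7 {ι : Type*} {f : ι → L → L} (hf : ∀ i, Finitary (f i)) :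
    Finitary fun x => ⨆ i, f i x := fun x =>
  calc ⨆ i, f i x
      = ⨆ i, ⨆ k ∈ {k : L | IsCompactElement k ∧ k ≤ x}, f i k := iSup_congr fun i => hf i x
    _ = ⨆ k ∈ {k : L | IsCompactElement k ∧ k ≤ x}, ⨆ i, f i k := by
      rw [iSup_comm]; exact iSup_congr fun k => iSup_comm

end Finitary

theorem ScottContinuous.finitary [IsCompactlyGenerated L] {f : L → L}
    (hf : ScottContinuous f) : Finitary f := fun x => by
  have hne : {k : L | IsCompactElement k ∧ k ≤ x}.Nonempty := ⟨⊥, isCompactElement_bot, bot_le⟩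
  conv_lhs => rw [← sSup_compact_le_eq x]
  rw [hf.map_sSup hne (directedOn_compact_le x), sSup_image]

section seqComp

variable {I : Type*} {φ : I → L → L}

theorem scottContinuous_seqComp (hφ : ∀ i, ScottContinuous (φ i)) (j : List I) :
    ScottContinuous (seqComp φ j) := by
  induction j with
  | nil => exact ScottContinuous.id
  | cons i j ih => exact ih.comp (hφ i)

theorem monotone_seqComp (hφ : ∀ i, Monotone (φ i)) (j : List I) :
    Monotone (seqComp φ j) := by
  induction j with
  | nil => exact monotone_id
  | cons i j ih => exact (hφ i).comp ih

theorem le_seqComp (hφ : ∀ i x, x ≤ φ i x) (j : List I) (x : L) : x ≤ seqComp φ j x := by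
  induction j with
  | nil => exact le_rfl
  | cons i j ih => exact ih.trans (hφ i _)

theorem directed_seqComp (hmono : ∀ i, Monotone (φ i)) (hext : ∀ i x, x ≤ φ i x) (x : L) :
    Directed (· ≤ ·) fun j => seqComp φ j x := fun j₁ j₂ =>
  ⟨j₁ ++ j₂, by
    simp only [seqComp_append, Function.comp_apply]
    exact ⟨monotone_seqComp hmono j₁ (le_seqComp hext j₂ x), le_seqComp hext j₁ _⟩⟩

theorem seqComp_le (hφ : ∀ i, Monotone (φ i)) {y z : L} (hz : ∀ i, φ i z ≤ z) (hyz : y ≤ z)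
    (j : List I) : seqComp φ j y ≤ z := by
  induction j with
  | nil => exact hyz
  | cons i j ih => exact ((hφ i) ih).trans (hz i)

end seqComp

section seqCompSup

variable {I : Type*} {φ : I → L → L}

variable (φ) in
/-- The map `μ` of the statement. -/
def seqCompSup (x : L) : L :=
  ⨆ j : List I, seqComp φ j x

theorem seqComp_le_seqCompSup (j : List I) (x : L) : seqComp φ j x ≤ seqCompSup φ x :=
  le_iSup (fun j => seqComp φ j x) j

theorem le_seqCompSup (x : L) : x ≤ seqCompSup φ x :=
  seqComp_le_seqCompSup [] x

theorem apply_le_seqCompSup (i : I) (x : L) : φ i x ≤ seqCompSup φ x :=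
  seqComp_le_seqCompSup [i] x

theorem finitary_seqCompSup [IsCompactlyGenerated L] (hφ : ∀ i, Finitary (φ i)) :
    Finitary (seqCompSup φ) :=
  Finitary.iSup_s7 fun j => (scottContinuous_seqComp (fun i => (hφ i).scottContinuous) j).finitary

theorem apply_seqCompSup_le (hφ : ∀ i, Finitary (φ i)) (hext : ∀ i x, x ≤ φ i x)
    (i : I) (x : L) : φ i (seqCompSup φ x) ≤ seqCompSup φ x := by
  have hdir := directed_seqComp (fun i => (hφ i).monotone_s7) hext x
  rw [seqCompSup, ← sSup_range,
    (hφ i).scottContinuous.map_sSup (range_nonempty _) hdir.directedOn_range, ← range_comp]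
  exact sSup_le <| forall_mem_range.2 fun j => seqComp_le_seqCompSup (i :: j) x

theorem isClosureOp_seqCompSup (hφ : ∀ i, Finitary (φ i)) (hext : ∀ i x, x ≤ φ i x) :
    IsClosureOp (seqCompSup φ) := by
  have hmono i : Monotone (φ i) := (hφ i).monotone_s7
  refine ⟨le_seqCompSup, fun x => le_antisymm ?_ (le_seqCompSup _), fun x y hxy => ?_⟩
  · exact iSup_le <| seqComp_le hmono (fun i => apply_seqCompSup_le hφ hext i x) le_rfl
  · exact iSup_mono fun j => monotone_seqComp hmono j hxy

theorem seqCompSup_le (hφ : ∀ i, Monotone (φ i)) {ρ : L → L} (hρ : IsClosureOp ρ)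
    (h : ∀ i x, φ i x ≤ ρ x) (x : L) : seqCompSup φ x ≤ ρ x :=
  iSup_le <| seqComp_le hφ (fun i => (h i (ρ x)).trans (hρ.2.1 x).le) (hρ.1 x)

end seqCompSup

end

/-- For a family of algebraic closure operators `φ_i` on an algebraic lattice,
the map `μ x = ⨆_{finite sequences j in I} φ_{j₁}(φ_{j₂}(⋯ φ_{j_k}(x)⋯))` is an
algebraic closure operator, it is an upper bound of the family, and it is below
every closure operator that is an upper bound of the family; i.e. `μ` is the join
of the family in the lattice of closure operators, and this join is algebraic. -/
theorem mu_is_join {L : Type*} [CompleteLattice L] [IsCompactlyGenerated L]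
    {I : Type*} (φ : I → L → L)
    (hco : ∀ i, IsClosureOp (φ i)) (hfin : ∀ i, Finitary (φ i)) :
    IsClosureOp (fun x : L => ⨆ j : List I, seqComp φ j x) ∧
    Finitary (fun x : L => ⨆ j : List I, seqComp φ j x) ∧
    (∀ (i : I) (x : L), φ i x ≤ ⨆ j : List I, seqComp φ j x) ∧
    (∀ ρ : L → L, IsClosureOp ρ → (∀ (i : I) (x : L), φ i x ≤ ρ x) →
      ∀ x : L, (⨆ j : List I, seqComp φ j x) ≤ ρ x) :=
  ⟨isClosureOp_seqCompSup hfin fun i => (hco i).1, finitary_seqCompSup hfin,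
    apply_le_seqCompSup, fun _ hρ => seqCompSup_le (fun i => (hfin i).monotone_s7) hρ⟩
end

section
/- Let L be an algebraic lattice, let a, b, v ∈ L all be compact, and define φ^v_{a,b} : L → L by φ^v_{a,b}(x) = x ⊔ v ⊔ b if a ≤ x ⊔ v, and φ^v_{a,b}(x) = x ⊔ v otherwise. Then φ^v_{a,b} is a compact element of the complete lattice of algebraic closure operators on L; equivalently, φ^v_{a,b} is join-inaccessible: for every family (σ_ψ)_{ψ∈Ψ} of algebraic closure operators on L directed under the pointwise order and satisfying φ^v_{a,b}(x) = ⨆_{ψ∈Ψ} σ_ψ(x) for all x ∈ L, there exists ψ ∈ Ψ with σ_ψ = φ^v_{a,b}. -/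
open scoped Classical in
/-- The operator `φ^v_{a,b}` sending `x` to `x ⊔ v ⊔ b` when `a ≤ x ⊔ v`, and to
`x ⊔ v` otherwise. -/
noncomputable def phiV {L : Type*} [CompleteLattice L] (v a b : L) (x : L) : L :=
  if a ≤ x ⊔ v then x ⊔ v ⊔ b else x ⊔ v

/-!
Every closure operator `φ` with `v ≤ φ ⊥` and `b ≤ φ a` lies above `φ^v_{a,b}`. If a directed
family `σ` has pointwise supremum `φ^v_{a,b}`, compactness of `v` and `b` yields single members
with `v ≤ σ ψ₀ ⊥` and `b ≤ σ ψ₁ a`. A common upper bound `σ ψ` of these two is then a closure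
operator above `φ^v_{a,b}`, and it is below `φ^v_{a,b}` as a member of the family.
-/

theorem IsCompactElement.exists_le_of_le_iSup_of_directed {α ι : Type*} [CompleteLattice α]
    [Nonempty ι] {k : α} (hk : IsCompactElement k) {f : ι → α} (hf : Directed (· ≤ ·) f)
    (h : k ≤ ⨆ i, f i) : ∃ i, k ≤ f i := by
  obtain ⟨-, ⟨i, rfl⟩, hi⟩ := (CompleteLattice.isCompactElement_iff_le_of_directed_sSup_le α k).mp
    hk _ (Set.range_nonempty f) hf.directedOn_range (by rwa [sSup_range])
  exact ⟨i, hi⟩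

section phiV

variable {L : Type*} [CompleteLattice L] {v a b x : L}

theorem sup_le_phiV : x ⊔ v ≤ phiV v a b x := by
  unfold phiV
  split_ifs
  exacts [le_sup_left, le_rfl]

theorem phiV_of_le (h : a ≤ x ⊔ v) : phiV v a b x = x ⊔ v ⊔ b := if_pos h

theorem phiV_of_not_le (h : ¬a ≤ x ⊔ v) : phiV v a b x = x ⊔ v := if_neg h

theorem le_phiV_bot : v ≤ phiV v a b ⊥ :=
  le_sup_right.trans sup_le_phiV

theorem le_phiV_self : b ≤ phiV v a b a := by
  rw [phiV_of_le le_sup_left]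
  exact le_sup_right

theorem phiV_le_of_isClosureOp {φ : L → L} (hφ : IsClosureOp φ) (hv : v ≤ φ ⊥)
    (hb : b ≤ φ a) : phiV v a b ≤ φ := by
  obtain ⟨le_φ, φ_idem, φ_mono⟩ := hφ
  intro x
  have hxv : x ⊔ v ≤ φ x := sup_le (le_φ x) (hv.trans (φ_mono ⊥ x bot_le))
  by_cases hax : a ≤ x ⊔ v
  · rw [phiV_of_le hax]
    refine sup_le hxv ?_
    calc b ≤ φ a := hb
      _ ≤ φ (φ x) := φ_mono a _ (hax.trans hxv)
      _ = φ x := φ_idem x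
  · rwa [phiV_of_not_le hax]

end phiV

theorem phiV_compact_general {L : Type*} [CompleteLattice L]
    (a b v : L)
    (hb : IsCompactElement b)
    (hv : IsCompactElement v) :
    ∀ (Ψ : Type*) (_ : Nonempty Ψ) (σ : Ψ → L → L), Directed (· ≤ ·) σ →
      (∀ ψ, IsClosureOp (σ ψ) ∧ Finitary (σ ψ)) →
      (∀ x : L, phiV v a b x = ⨆ ψ, σ ψ x) →
      ∃ ψ, σ ψ = phiV v a b := by
  intro Ψ _ σ hσ hσ_closure hσ_sup
  have hσ_at : ∀ x, Directed (· ≤ ·) fun ψ => σ ψ x := fun x =>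
    hσ.mono_comp _ fun _ _ h => h x
  obtain ⟨ψ₀, hv₀⟩ := hv.exists_le_of_le_iSup_of_directed (hσ_at ⊥) (hσ_sup ⊥ ▸ le_phiV_bot)
  obtain ⟨ψ₁, hb₁⟩ := hb.exists_le_of_le_iSup_of_directed (hσ_at a) (hσ_sup a ▸ le_phiV_self)
  obtain ⟨ψ, h₀, h₁⟩ := hσ ψ₀ ψ₁
  refine ⟨ψ, le_antisymm (fun x => hσ_sup x ▸ le_iSup (σ · x) ψ) ?_⟩
  exact phiV_le_of_isClosureOp (hσ_closure ψ).1 (hv₀.trans (h₀ ⊥)) (hb₁.trans (h₁ a))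

/-- If `a`, `b` and `v` are all compact in an algebraic lattice `L`, then
`φ^v_{a,b}` is a compact element of the complete lattice of algebraic closure
operators on `L`, i.e. it is join-inaccessible: any (nonempty) pointwise-directed
family of algebraic closure operators whose pointwise supremum is `φ^v_{a,b}`
contains `φ^v_{a,b}`. -/
theorem phiV_compact {L : Type*} [CompleteLattice L] [IsCompactlyGenerated L]
    (a b v : L) (ha : IsCompactElement a)
    (hb : IsCompactElement b)
    (hv : IsCompactElement v) :
    ∀ (Ψ : Type*) (_ : Nonempty Ψ) (σ : Ψ → L → L), Directed (· ≤ ·) σ →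
      (∀ ψ, IsClosureOp (σ ψ) ∧ Finitary (σ ψ)) →
      (∀ x : L, phiV v a b x = ⨆ ψ, σ ψ x) →
      ∃ ψ, σ ψ = phiV v a b :=
  phiV_compact_general a b v hb hv
end

section
/- Let L be an algebraic lattice and let σ be an algebraic (finitary) closure operator on L. Set v = σ(⊥), and for a, b ∈ L define φ^v_{a,b} : L → L by φ^v_{a,b}(x) = x ⊔ v ⊔ b if a ≤ x ⊔ v, and φ^v_{a,b}(x) = x ⊔ v otherwise. Then for every x ∈ L, σ(x) = ⨆ {φ^v_{a,b}(x) : a compact in L, b compact, b ≤ σ(a)}; that is, σ is the (pointwise) join of the family of operators φ^v_{a,b} indexed by compact a and compact b ≤ σ(a). -/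
/-! Every `φ^v_{a,b}` with `b ≤ σ a` lies below `σ`: it only adds `σ ⊥ ≤ σ x` and, once
`a ≤ x ⊔ σ ⊥ ≤ σ x`, also `b ≤ σ a ≤ σ (σ x) = σ x`. Conversely, since `σ` is finitary,
`σ x` is the join of the `σ k` for compact `k ≤ x`; each such `σ k` is the join of the
compact `b ≤ σ k`, and `k ≤ x` forces `b ≤ φ^v_{k,b}(x)`. -/

section

variable {L : Type*} [CompleteLattice L] {σ : L → L}

theorem IsClosureOp.sup_map_bot_le (hσ : IsClosureOp σ) (x : L) : x ⊔ σ ⊥ ≤ σ x :=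
  sup_le (hσ.1 x) (hσ.2.2 ⊥ x bot_le)

theorem IsClosureOp.phiV_le (hσ : IsClosureOp σ) {a b : L} (hb : b ≤ σ a) (x : L) :
    phiV (σ ⊥) a b x ≤ σ x := by
  unfold phiV
  split_ifs with ha
  · refine sup_le (hσ.sup_map_bot_le x) ?_
    calc b ≤ σ a := hb
      _ ≤ σ (σ x) := hσ.2.2 _ _ (ha.trans (hσ.sup_map_bot_le x))
      _ = σ x := hσ.2.1 x
  · exact hσ.sup_map_bot_le x

theorem le_phiV_of_le (v : L) {a x : L} (b : L) (ha : a ≤ x) : b ≤ phiV v a b x := by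
  rw [phiV, if_pos (ha.trans le_sup_left)]
  exact le_sup_right

end

/-- Every algebraic closure operator `σ` on an algebraic lattice is the pointwise
join, with `v = σ ⊥`, of the operators `φ^v_{a,b}` over all compact `a` and all
compact `b ≤ σ a`. -/
theorem aco_eq_sup_phiV {L : Type*} [CompleteLattice L] [IsCompactlyGenerated L]
    (σ : L → L) (hσ : IsClosureOp σ) (hfin : Finitary σ) :
    ∀ x : L, σ x =
      ⨆ p ∈ {p : L × L | IsCompactElement p.1 ∧
          IsCompactElement p.2 ∧ p.2 ≤ σ p.1},
        phiV (σ ⊥) p.1 p.2 x := by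
  intro x
  apply le_antisymm
  · rw [hfin x]
    refine iSup₂_le fun k ⟨hk, hkx⟩ => ?_
    rw [← sSup_compact_le_eq (σ k)]
    refine sSup_le fun b ⟨hb, hbk⟩ => (le_phiV_of_le (σ ⊥) b hkx).trans ?_
    exact le_iSup₂_of_le (k, b) ⟨hk, hb, hbk⟩ le_rfl
  · exact iSup₂_le fun p ⟨_, _, hp⟩ => hσ.phiV_le hp x
end
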